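/- Let Θ be a space of input histories over (E, I) with E finite. Then Θ is tight if and only if for all ω ∈ E and all h, h' ∈ Θ, h ∼_ω h' implies h = h'. -/

import Mathlib

namespace Caus

/-- Partial functions over events `E` with value family `V`:
each event is assigned an optional value. -/
abbrev PF (E : Type) (V : E → Type) : Type := ∀ ω : E, Option (V ω)

variable {E : Type} {I O : E → Type}

/-- The total function `k` viewed as a partial function with full domain. -/
def toPF (k : ∀ ω : E, I ω) : PF E I := fun ω => some (k ω)

/-- Domain of a partial function. -/
def dom (h : PF E I) : Set E := {ω | (h ω).isSome}

/-- The order on partial functions: `h' ≤ h` iff `dom h' ⊆ dom h` and they agree on `dom h'`. -/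
def le (h' h : PF E I) : Prop := ∀ ω : E, (h' ω).isSome → h' ω = h ω

/-- Compatibility: agreeing on the intersection of the domains. -/
def Compat (h h' : PF E I) : Prop :=
  ∀ ω : E, (h ω).isSome → (h' ω).isSome → h ω = h' ω

/-- Join of two partial functions (union, when they are compatible). -/
def join (h h' : PF E I) : PF E I := fun ω => (h ω).orElse fun _ => h' ω

/-- `k` is the join (union) of the set `S` of partial functions. -/
def IsJoinOf (k : PF E I) (S : Set (PF E I)) : Prop :=
  ∀ (ω : E) (x : I ω), k ω = some x ↔ ∃ h ∈ S, h ω = some x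

/-- `Ext Θ`: joins of nonempty pairwise-compatible subsets of `Θ`. -/
def Ext (Θ : Set (PF E I)) : Set (PF E I) :=
  {k | ∃ S ⊆ Θ, S.Nonempty ∧ S.Pairwise Compat ∧ IsJoinOf k S}

/-- A space of input histories: every `h ∈ Θ` is ∨-prime in `Ext Θ`. -/
def IsSpace (Θ : Set (PF E I)) : Prop :=
  ∀ h ∈ Θ, ∀ k ∈ Ext Θ, ∀ k' ∈ Ext Θ, Compat k k' →
    le h (join k k') → le h k ∨ le h k'

/-- Tip events of `h` in `Θ`. -/
def tips (Θ : Set (PF E I)) (h : PF E I) : Set E :=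
  {ω | ω ∈ dom h ∧ ∀ h' ∈ Θ, le h' h → h' ≠ h → ω ∉ dom h'}

/-- Extended functions: the output partial function has the same domain as the input. -/
def IsExtFun (Θ : Set (PF E I)) (F : PF E I → PF E O) : Prop :=
  ∀ k ∈ Ext Θ, dom (F k) = dom k

/-- The consistency condition for extended functions. -/
def Consistent (Θ : Set (PF E I)) (F : PF E I → PF E O) : Prop :=
  ∀ k ∈ Ext Θ, ∀ k' ∈ Ext Θ, le k' k → le (F k') (F k)

/-- `h` and `h'` are constrained at `ω`: both have tip `ω` and every consistent
extended function with binary outputs takes the same value at `ω` on them. -/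
def Constr (Θ : Set (PF E I)) (ω : E) (h h' : PF E I) : Prop :=
  h ∈ Θ ∧ h' ∈ Θ ∧ ω ∈ tips Θ h ∧ ω ∈ tips Θ h' ∧
  ∀ F : PF E I → PF E (fun _ => Bool),
    IsExtFun Θ F → Consistent Θ F → F h ω = F h' ω

/-- Causal function conditions: `f h` is an assignment of outputs to the tips of `h`,
with equal outputs on histories constrained at an event. -/
def IsCausFun (Θ : Set (PF E I)) (f : PF E I → PF E O) : Prop :=
  (∀ h ∈ Θ, dom (f h) = tips Θ h) ∧
  ∀ (ω : E) (h h' : PF E I), Constr Θ ω h h' → f h ω = f h' ω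

/-- Causal functions for `Θ` with outputs `W` (normalized to `none` outside `Θ`). -/
def CausFunSet (Θ : Set (PF E I)) (W : E → Type) : Set (PF E I → PF E W) :=
  {f | IsCausFun Θ f ∧ ∀ h ∉ Θ, ∀ ω : E, f h ω = none}

open Classical in
/-- The extended causal function `Ext f` of a causal function `f`. -/
noncomputable def extCF (Θ : Set (PF E I)) (f : PF E I → PF E O) : PF E I → PF E O :=
  fun k ω =>
    if hh : ∃ h, h ∈ Θ ∧ le h k ∧ ω ∈ tips Θ h then f hh.choose ω else none

open Classical in
/-- `Prime F̂`: the causal function underlying a consistent extended function. -/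
noncomputable def primeCF (Θ : Set (PF E I)) (F : PF E I → PF E O) : PF E I → PF E O :=
  fun h ω => if h ∈ Θ ∧ ω ∈ tips Θ h then F h ω else none

open Classical in
/-- Restriction of a causal function to a lowerset (normalized outside it). -/
noncomputable def restrictCF (lam : Set (PF E I)) (f : PF E I → PF E O) :
    PF E I → PF E O :=
  fun h => if h ∈ lam then f h else fun _ => none

/-- The free-choice condition. -/
def FreeChoice (Θ : Set (PF E I)) : Prop := ∀ k : ∀ ω : E, I ω, toPF k ∈ Ext Θ

/-- Tightness. -/
def Tight (Θ : Set (PF E I)) : Prop :=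
  ∀ k ∈ Ext Θ, ∀ ω ∈ dom k, ∃! h, h ∈ Θ ∧ le h k ∧ ω ∈ tips Θ h

/-- Maximal extended input histories. -/
def maxExt (Θ : Set (PF E I)) : Set (PF E I) :=
  {k | k ∈ Ext Θ ∧ ∀ k' ∈ Ext Θ, le k k' → k' = k}

/-- Lowersets (downward-closed subsets) of a space `Θ`. -/
def IsLowersetOf (Θ lam : Set (PF E I)) : Prop :=
  lam ⊆ Θ ∧ ∀ h ∈ lam, ∀ h' ∈ Θ, le h' h → h' ∈ lam


/-!
If `Θ` is tight, the history with tip `ω` below an extended history `k` is unique, so the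
binary extended function answering at `ω` whether `h ≤ k` is consistent; it separates `h`
from every other history with tip `ω`. Conversely, two histories with tip `ω` below a common
`k ∈ Ext Θ` are constrained at `ω`, since consistency forces `F̂ h ω = F̂ k ω = F̂ h' ω`;
finiteness of `E` provides such a history below `k` for every `ω ∈ dom k`, namely one of
minimal domain among the histories of `Θ` below `k` defined at `ω`.
-/

variable {Θ : Set (PF E I)} {h h' k k' : PF E I} {ω : E}

theorem le.refl (h : PF E I) : le h h := fun _ _ => rfl

theorem le.trans (hhk : le h k) (hkk' : le k k') : le h k' := fun ω hω =>
  (hhk ω hω).trans (hkk' ω (hhk ω hω ▸ hω))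

theorem le.dom_subset (hle : le h' h) : dom h' ⊆ dom h := fun ω hω => by
  simpa [dom, ← hle ω hω] using hω

theorem le.eq_of_dom_subset (hle : le h' h) (hdom : dom h ⊆ dom h') : h' = h := by
  funext ω
  by_cases hω : ω ∈ dom h'
  · exact hle ω hω
  · have hω' : ω ∉ dom h := fun h'ω => hω (hdom h'ω)
    rw [Option.not_isSome_iff_eq_none.mp hω, Option.not_isSome_iff_eq_none.mp hω']

theorem le.ncard_dom_lt [Finite E] (hle : le h' h) (hne : h' ≠ h) :
    (dom h').ncard < (dom h).ncard :=
  Set.ncard_lt_ncard ⟨hle.dom_subset, fun hdom => hne (hle.eq_of_dom_subset hdom)⟩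

theorem le_of_isJoinOf {S : Set (PF E I)} (hk : IsJoinOf k S) (hh : h ∈ S) : le h k := by
  intro ω hω
  obtain ⟨x, hx⟩ := Option.isSome_iff_exists.mp hω
  rw [hx, (hk ω x).mpr ⟨h, hh, hx⟩]

theorem mem_Ext_of_mem (hh : h ∈ Θ) : h ∈ Ext Θ := by
  refine ⟨{h}, Set.singleton_subset_iff.mpr hh, Set.singleton_nonempty h,
    Set.pairwise_singleton _ _, fun ω x => ?_⟩
  simp

theorem exists_mem_dom_of_mem_Ext (hk : k ∈ Ext Θ) (hω : ω ∈ dom k) :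
    ∃ h ∈ Θ, le h k ∧ ω ∈ dom h := by
  obtain ⟨S, hSΘ, -, -, hkS⟩ := hk
  obtain ⟨x, hx⟩ := Option.isSome_iff_exists.mp hω
  obtain ⟨h, hhS, hhx⟩ := (hkS ω x).mp hx
  exact ⟨h, hSΘ hhS, le_of_isJoinOf hkS hhS, by simp [dom, hhx]⟩

theorem eq_of_le_of_mem_tips (hh : h ∈ Θ) (hle : le h h') (hω : ω ∈ dom h)
    (hω' : ω ∈ tips Θ h') : h = h' := by
  by_contra hne
  exact hω'.2 h hh hle hne hω

theorem exists_le_mem_tips [Finite E] (hh : h ∈ Θ) (hω : ω ∈ dom h) :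
    ∃ u ∈ Θ, le u h ∧ ω ∈ tips Θ u := by
  obtain ⟨u, ⟨huΘ, huh, hωu⟩, hmin⟩ := (measure fun u : PF E I => (dom u).ncard).wf.has_min
    {u | u ∈ Θ ∧ le u h ∧ ω ∈ dom u} ⟨h, hh, le.refl h, hω⟩
  refine ⟨u, huΘ, huh, hωu, fun v hvΘ hvu hne hωv => ?_⟩
  exact hmin v ⟨hvΘ, hvu.trans huh, hωv⟩ (hvu.ncard_dom_lt hne)

theorem exists_le_mem_tips_of_mem_Ext [Finite E] (hk : k ∈ Ext Θ) (hω : ω ∈ dom k) :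
    ∃ u ∈ Θ, le u k ∧ ω ∈ tips Θ u := by
  obtain ⟨h, hh, hhk, hωh⟩ := exists_mem_dom_of_mem_Ext hk hω
  obtain ⟨u, huΘ, huh, hωu⟩ := exists_le_mem_tips hh hωh
  exact ⟨u, huΘ, huh.trans hhk, hωu⟩

theorem constr_of_le_of_mem_Ext (hk : k ∈ Ext Θ) (hh : h ∈ Θ) (hh' : h' ∈ Θ)
    (hhk : le h k) (hh'k : le h' k) (hω : ω ∈ tips Θ h) (hω' : ω ∈ tips Θ h') :
    Constr Θ ω h h' := by
  refine ⟨hh, hh', hω, hω', fun F hF hFcons => ?_⟩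
  have hFk : ∀ u ∈ Θ, le u k → ω ∈ tips Θ u → F u ω = F k ω := fun u hu huk hωu =>
    hFcons k hk u (mem_Ext_of_mem hu) huk ω ((hF u (mem_Ext_of_mem hu)).superset hωu.1)
  rw [hFk h hh hhk hω, hFk h' hh' hh'k hω']

theorem Tight.le_iff_le (ht : Tight Θ) (hk : k ∈ Ext Θ) (hk' : k' ∈ Ext Θ) (hle : le k' k)
    (hω : ω ∈ dom k') (hh : h ∈ Θ) (hωh : ω ∈ tips Θ h) : le h k' ↔ le h k := by
  refine ⟨fun hhk' => hhk'.trans hle, fun hhk => ?_⟩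
  obtain ⟨u, ⟨huΘ, huk', hωu⟩, -⟩ := ht k' hk' ω hω
  obtain ⟨v, -, hv⟩ := ht k hk ω (hle.dom_subset hω)
  rw [hv h ⟨hh, hhk, hωh⟩, ← hv u ⟨huΘ, huk'.trans hle, hωu⟩]
  exact huk'

open Classical in
-- Answering `h ≤ k` is consistent only at a tip of `h`, hence the constant `true` elsewhere.
noncomputable def tipIndicator (h : PF E I) (ω : E) : PF E I → PF E (fun _ => Bool) :=
  fun k ω' => (k ω').map fun _ => decide (ω' = ω → le h k)

theorem isExtFun_tipIndicator (h : PF E I) (ω : E) : IsExtFun Θ (tipIndicator h ω) := by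
  intro k _
  ext ω'
  simp [dom, tipIndicator]

theorem Tight.consistent_tipIndicator (ht : Tight Θ) (hh : h ∈ Θ) (hωh : ω ∈ tips Θ h) :
    Consistent Θ (tipIndicator h ω) := by
  intro k hk k' hk' hle ω' hω'
  have hω'k' : ω' ∈ dom k' := by simpa [dom, tipIndicator] using hω'
  have hiff : (ω' = ω → le h k') ↔ (ω' = ω → le h k) := forall_congr' fun hω'ω => by
    subst hω'ω
    exact ht.le_iff_le hk hk' hle hω'k' hh hωh
  simp only [tipIndicator, hle ω' hω'k']
  exact congrArg (Option.map · (k ω')) (funext fun _ => decide_eq_decide.mpr hiff)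

open Classical in
theorem tipIndicator_apply_self (hω : ω ∈ dom k) :
    tipIndicator h ω k ω = some (decide (le h k)) := by
  obtain ⟨x, hx⟩ := Option.isSome_iff_exists.mp hω
  simp [tipIndicator, hx]

theorem Tight.eq_of_constr (ht : Tight Θ) (hc : Constr Θ ω h h') : h = h' := by
  obtain ⟨hh, -, hωh, hωh', hF⟩ := hc
  have hsep := hF (tipIndicator h ω) (isExtFun_tipIndicator h ω)
    (ht.consistent_tipIndicator hh hωh)
  rw [tipIndicator_apply_self hωh.1, tipIndicator_apply_self hωh'.1] at hsep
  have hhh' : le h h' := by simpa [le.refl h] using hsep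
  exact eq_of_le_of_mem_tips hh hhh' hωh.1 hωh'

theorem stmt7_general {E : Type} [Fintype E] {I : E → Type}
    (Θ : Set (PF E I)) :
    Tight Θ ↔ ∀ (ω : E) (h h' : PF E I), Constr Θ ω h h' → h = h' := by
  refine ⟨fun ht ω h h' => ht.eq_of_constr, fun hconstr k hk ω hω => ?_⟩
  obtain ⟨h, hh, hhk, hωh⟩ := exists_le_mem_tips_of_mem_Ext hk hω
  exact ⟨h, ⟨hh, hhk, hωh⟩, fun h' ⟨hh', hh'k, hωh'⟩ =>
    hconstr ω h' h (constr_of_le_of_mem_Ext hk hh' hh hh'k hhk hωh' hωh)⟩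

/-- a space of input histories is tight iff histories constrained at
some event are always equal. -/
theorem stmt7 {E : Type} [Fintype E] {I : E → Type} [∀ ω, Nonempty (I ω)]
    (Θ : Set (PF E I)) (hS : IsSpace Θ) :
    Tight Θ ↔ ∀ (ω : E) (h h' : PF E I), Constr Θ ω h h' → h = h' :=
  stmt7_general Θ

end Caus
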